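/- Every nonzero fractional ideal I of B admits a k[t]-basis of the shape (q_0, q_1·h_1(x), …, q_{n−1}·h_{n−1}(x)) where: (1) each q_i ∈ K× and each h_i ∈ k[t][X] is monic of degree i in X; and (2) there are inclusions of fractional k[t]-ideals q_0·k[t] ⊆ q_1·k[t] ⊆ … ⊆ q_{n−1}·k[t]. The q_i are uniquely determined up to multiplication by units of k[t], and the index ideal [I : k[t][x]] (the fractional k[t]-ideal generated by the determinant of the transition matrix from the basis (1, x, …, x^{n−1}) of k[t][x] to this basis of I) equals (q_0⋯q_{n−1})·k[t]. -/

import Mathlib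

/-- The family `(q_0·h_0(x), …, q_{n-1}·h_{n-1}(x))` attached to `(q, h)`. -/
noncomputable def triBasisFun (k L : Type*) [Field k] [Field L] [Algebra (RatFunc k) L]
    (x : L) (n : ℕ) (q : Fin n → RatFunc k) (h : Fin n → Polynomial (Polynomial k)) :
    Fin n → L :=
  fun i => algebraMap (RatFunc k) L (q i) *
    Polynomial.aeval x ((h i).map (algebraMap (Polynomial k) (RatFunc k)))

/-- `(q, h)` is a triangular `k[t]`-basis of the subset `I ⊆ L`: the `h i` are monic of
degree `i`, the principal ideals `q i·k[t]` form an increasing chain, and the family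
`q_i·h_i(x)` is a `k[t]`-basis of `I`. -/
def IsTriangularBasis (k L : Type*) [Field k] [Field L] [Algebra (RatFunc k) L]
    [Algebra (Polynomial k) L]
    (x : L) (n : ℕ) (I : Set L) (q : Fin n → RatFunc k)
    (h : Fin n → Polynomial (Polynomial k)) : Prop :=
  (∀ i, q i ≠ 0) ∧ (∀ i, (h i).Monic) ∧ (∀ i : Fin n, (h i).natDegree = (i : ℕ)) ∧
  (∀ i j : Fin n, i ≤ j →
    ∃ c : Polynomial k, q i = algebraMap (Polynomial k) (RatFunc k) c * q j) ∧
  LinearIndependent (Polynomial k) (triBasisFun k L x n q h) ∧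
  (∀ z : L, z ∈ I ↔ z ∈ Submodule.span (Polynomial k) (Set.range (triBasisFun k L x n q h)))


open Polynomial

/-- Downward induction on `Fin n`. -/
private lemma auxRevind {n : ℕ} {P : Fin n → Prop}
    (h : ∀ i : Fin n, (∀ j : Fin n, (i : ℕ) < (j : ℕ) → P j) → P i) : ∀ i, P i := by
  have key : ∀ d : ℕ, ∀ i : Fin n, n - (i : ℕ) ≤ d → P i := by
    intro d
    induction d with
    | zero => intro i hi; exact absurd i.isLt (by omega)
    | succ d ih => intro i _; exact h i fun j hj => ih j (by omega)
  intro i; exact key n i (by omega)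

/-- A submodule of the fraction field of a PID which admits a common denominator and a
nonzero element is principal. -/
private lemma auxGenerator {A K : Type*} [CommRing A] [IsDomain A] [IsPrincipalIdealRing A]
    [Field K] [Algebra A K] [IsFractionRing A K]
    (J : Submodule A K) (e : A) (he : e ≠ 0)
    (hden : ∀ y ∈ J, ∃ c : A, algebraMap A K e * y = algebraMap A K c)
    (hJ : ∃ y ∈ J, y ≠ 0) :
    ∃ g : K, g ≠ 0 ∧ ∀ y : K, y ∈ J ↔ ∃ a : A, y = algebraMap A K a * g := by
  have hinj : Function.Injective (algebraMap A K) := IsFractionRing.injective A K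
  have hemem : ∀ c : A, (∃ y ∈ J, algebraMap A K e * y = algebraMap A K c) →
      (∃ y ∈ J, algebraMap A K e * y = algebraMap A K c) := fun c h => h
  -- the ideal of numerators
  let N : Ideal A :=
    { carrier := { c | ∃ y ∈ J, algebraMap A K e * y = algebraMap A K c }
      add_mem' := by
        rintro c d ⟨y, hy, hyc⟩ ⟨z, hz, hzc⟩
        exact ⟨y + z, J.add_mem hy hz, by rw [map_add, mul_add, hyc, hzc]⟩
      zero_mem' := ⟨0, J.zero_mem, by simp⟩
      smul_mem' := by
        rintro a c ⟨y, hy, hyc⟩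
        refine ⟨a • y, J.smul_mem a hy, ?_⟩
        rw [Algebra.smul_def, smul_eq_mul, map_mul, ← mul_assoc, mul_comm (algebraMap A K e),
          mul_assoc, hyc] }
  obtain ⟨g₀, hg₀⟩ := Submodule.IsPrincipal.principal N
  have hg₀N : g₀ ∈ N := hg₀ ▸ Ideal.subset_span rfl
  obtain ⟨y₀, hy₀J, hy₀⟩ := hg₀N
  have he' : algebraMap A K e ≠ 0 := fun h => he (hinj (h.trans (map_zero _).symm))
  have hy₀ne : y₀ ≠ 0 := by
    obtain ⟨y, hyJ, hy⟩ := hJ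
    obtain ⟨c, hc⟩ := hden y hyJ
    intro h0
    -- then g₀ = 0, so N = ⊥, but c ∈ N is nonzero
    have hg0 : algebraMap A K g₀ = 0 := by rw [← hy₀, h0, mul_zero]
    have hcN : c ∈ N := ⟨y, hyJ, hc⟩
    rw [hg₀] at hcN
    obtain ⟨a, hc'⟩ := Ideal.mem_span_singleton'.mp hcN
    have : algebraMap A K c = 0 := by
      rw [← hc', map_mul, hg0, mul_zero]
    rw [this] at hc
    exact hy (by
      have := mul_eq_zero.mp hc
      tauto)
  refine ⟨y₀, hy₀ne, fun y => ⟨fun hyJ => ?_, ?_⟩⟩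
  · obtain ⟨c, hc⟩ := hden y hyJ
    have hcN : c ∈ N := ⟨y, hyJ, hc⟩
    rw [hg₀] at hcN
    obtain ⟨a, hc'⟩ := Ideal.mem_span_singleton'.mp hcN
    refine ⟨a, ?_⟩
    apply mul_left_cancel₀ he'
    rw [hc, ← hc', map_mul, ← hy₀]; ring
  · rintro ⟨a, rfl⟩
    have : algebraMap A K a * y₀ = a • y₀ := (Algebra.smul_def a y₀).symm
    rw [this]
    exact J.smul_mem a hy₀J

section Aux

variable {A : Type*} [CommRing A] [IsDomain A]
  {K : Type*} [Field K] [Algebra A K] [IsFractionRing A K]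
  {L : Type*} [Field L] [Algebra K L] [Algebra A L] [IsScalarTower A K L]

/-- Coordinates of `Q · H(x)` with respect to the power basis. -/
private lemma auxTricoord {n : ℕ} (x : L) (bX : Module.Basis (Fin n) K L)
    (hbX : ∀ j : Fin n, bX j = x ^ (j : ℕ))
    (Q : K) (H : Polynomial A) (hH : H.natDegree < n) (m : Fin n) :
    bX.repr (algebraMap K L Q * Polynomial.aeval x (H.map (algebraMap A K))) m
      = Q * algebraMap A K (H.coeff m) := by
  classical
  have hdeg : (H.map (algebraMap A K)).natDegree < n :=
    Polynomial.natDegree_map_le.trans_lt hH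
  rw [Polynomial.aeval_eq_sum_range' hdeg]
  have h1 : algebraMap K L Q * ∑ i ∈ Finset.range n, (H.map (algebraMap A K)).coeff i • x ^ i
      = ∑ i ∈ Finset.range n, (Q * (H.map (algebraMap A K)).coeff i) • x ^ i := by
    rw [Finset.mul_sum]
    refine Finset.sum_congr rfl fun i _ => ?_
    simp only [Algebra.smul_def, map_mul, mul_assoc]
  rw [h1, Finset.sum_range fun i => (Q * (H.map (algebraMap A K)).coeff i) • x ^ i]
  have h2 : ∀ j : Fin n, (Q * (H.map (algebraMap A K)).coeff (j : ℕ)) • x ^ (j : ℕ)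
      = (Q * (H.map (algebraMap A K)).coeff (j : ℕ)) • bX j := by
    intro j; rw [hbX]
  simp_rw [h2]
  rw [map_sum, Finsupp.finset_sum_apply, Finset.sum_eq_single m]
  · simp [Module.Basis.repr_self_apply, Polynomial.coeff_map]
  · intro j _ hj
    simp [Module.Basis.repr_self_apply, hj]
  · intro h; exact absurd (Finset.mem_univ m) h

/-- Core computation for triangular families. -/
private lemma auxTricore {n : ℕ} (bX : Module.Basis (Fin n) K L) (v : Fin n → L) (q : Fin n → K)
    (hq : ∀ i, q i ≠ 0)
    (hvt : ∀ j m : Fin n, (j : ℕ) < (m : ℕ) → bX.repr (v j) m = 0)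
    (hvd : ∀ j : Fin n, bX.repr (v j) j = q j)
    (G : Fin n → A) (s : L) (hsum : ∑ j, G j • v j = s) (i : Fin n)
    (hdeg : ∀ m : Fin n, (i : ℕ) < (m : ℕ) → bX.repr s m = 0) :
    bX.repr s i = algebraMap A K (G i) * q i ∧
      ∀ m : Fin n, (i : ℕ) < (m : ℕ) → G m = 0 := by
  classical
  have hinj : Function.Injective (algebraMap A K) := IsFractionRing.injective A K
  have hrep : ∀ m : Fin n, bX.repr s m = ∑ j, algebraMap A K (G j) * bX.repr (v j) m := by
    intro m
    rw [← hsum, map_sum, Finsupp.finset_sum_apply]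
    refine Finset.sum_congr rfl fun j _ => ?_
    rw [← algebraMap_smul K (G j) (v j), map_smul, Finsupp.smul_apply, smul_eq_mul]
  have hzero : ∀ m : Fin n, (i : ℕ) < (m : ℕ) → G m = 0 := by
    refine auxRevind (fun m ih him => ?_)
    have h0 : (0 : K) = algebraMap A K (G m) * q m := by
      rw [← hdeg m him, hrep m, Finset.sum_eq_single m]
      · rw [hvd]
      · intro j _ hj
        rcases lt_or_gt_of_ne (fun hc : (j : ℕ) = (m : ℕ) => hj (Fin.ext hc)) with hlt | hgt
        · rw [hvt j m hlt, mul_zero]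
        · rw [ih j hgt (lt_trans him hgt), map_zero, zero_mul]
      · intro h; exact absurd (Finset.mem_univ m) h
    have : algebraMap A K (G m) = 0 := by
      rcases mul_eq_zero.mp h0.symm with h | h
      · exact h
      · exact absurd h (hq m)
    exact hinj (this.trans (map_zero _).symm)
  refine ⟨?_, hzero⟩
  rw [hrep i, Finset.sum_eq_single i]
  · rw [hvd]
  · intro j _ hj
    rcases lt_or_gt_of_ne (fun hc : (j : ℕ) = (i : ℕ) => hj (Fin.ext hc)) with hlt | hgt
    · rw [hvt j i hlt, mul_zero]
    · rw [hzero j hgt, map_zero, zero_mul]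
  · intro h; exact absurd (Finset.mem_univ i) h

/-- Linear independence of a triangular family. -/
private lemma auxTriindep {n : ℕ} (bX : Module.Basis (Fin n) K L) (v : Fin n → L) (q : Fin n → K)
    (hq : ∀ i, q i ≠ 0)
    (hvt : ∀ j m : Fin n, (j : ℕ) < (m : ℕ) → bX.repr (v j) m = 0)
    (hvd : ∀ j : Fin n, bX.repr (v j) j = q j) :
    LinearIndependent A v := by
  classical
  rw [linearIndependent_iff']
  intro s g hsum i his
  set G : Fin n → A := fun j => if j ∈ s then g j else 0 with hG
  have hsum' : ∑ j, G j • v j = 0 := by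
    rw [← hsum]
    rw [← Finset.sum_subset (Finset.subset_univ s) (fun x _ hx => by simp [hG, hx])]
    exact Finset.sum_congr rfl fun j hj => by simp [hG, hj]
  have := auxTricore bX v q hq hvt hvd G 0 hsum' i (fun m _ => by simp)
  have h0 : algebraMap A K (G i) * q i = 0 := by
    rw [← this.1]; simp
  have : algebraMap A K (G i) = 0 := by
    rcases mul_eq_zero.mp h0 with h | h
    · exact h
    · exact absurd h (hq i)
  have hGi : G i = 0 := IsFractionRing.injective A K (this.trans (map_zero _).symm)
  rw [hG] at hGi; simpa [his] using hGi

/-- leading coefficients of low-degree elements of the span of a triangular family. -/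
private lemma auxLeadlem {n : ℕ} (bX : Module.Basis (Fin n) K L) (v : Fin n → L) (q : Fin n → K)
    (hq : ∀ i, q i ≠ 0)
    (hvt : ∀ j m : Fin n, (j : ℕ) < (m : ℕ) → bX.repr (v j) m = 0)
    (hvd : ∀ j : Fin n, bX.repr (v j) j = q j)
    (s : L) (hs : s ∈ Submodule.span A (Set.range v)) (i : Fin n)
    (hdeg : ∀ m : Fin n, (i : ℕ) < (m : ℕ) → bX.repr s m = 0) :
    ∃ a : A, bX.repr s i = algebraMap A K a * q i := by
  obtain ⟨g, hg⟩ := (Submodule.mem_span_range_iff_exists_fun A).1 hs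
  exact ⟨g i, (auxTricore bX v q hq hvt hvd g s hg i hdeg).1⟩

end Aux


section Aux3

variable {A : Type*} [CommRing A] [IsDomain A] [IsPrincipalIdealRing A]
  {K : Type*} [Field K] [Algebra A K] [IsFractionRing A K]
  {L : Type*} [Field L] [Algebra K L] [Algebra A L] [IsScalarTower A K L]

private theorem auxExists {N : ℕ} (x : L) (bX : Module.Basis (Fin (N + 1)) K L)
    (hbX : ∀ j : Fin (N + 1), bX j = x ^ (j : ℕ))
    (c : Fin (N + 1) → A) (hxn : x ^ (N + 1) = ∑ m : Fin (N + 1), c m • x ^ (m : ℕ))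
    (S : Submodule A L)
    (hxS : ∀ z ∈ S, x * z ∈ S)
    (hden : ∀ i : Fin (N + 1), ∃ e : A, e ≠ 0 ∧ ∀ z ∈ S, ∃ a : A,
      algebraMap A K e * bX.repr z i = algebraMap A K a)
    (hne : ∀ i : Fin (N + 1), ∃ z ∈ S, (∀ m : Fin (N + 1), (i : ℕ) < (m : ℕ) →
      bX.repr z m = 0) ∧ bX.repr z i ≠ 0) :
    ∃ (q : Fin (N + 1) → K) (h : Fin (N + 1) → Polynomial A),
      (∀ i, q i ≠ 0) ∧ (∀ i, (h i).Monic) ∧ (∀ i : Fin (N + 1), (h i).natDegree = (i : ℕ)) ∧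
      (∀ i j : Fin (N + 1), i ≤ j → ∃ a : A, q i = algebraMap A K a * q j) ∧
      (∀ z : L, z ∈ S ↔ z ∈ Submodule.span A (Set.range (fun i =>
        algebraMap K L (q i) * Polynomial.aeval x ((h i).map (algebraMap A K))))) ∧
      (∀ (i : Fin (N + 1)) (z : L), z ∈ S → (∀ m : Fin (N + 1), (i : ℕ) < (m : ℕ) →
        bX.repr z m = 0) → ∃ a : A, bX.repr z i = algebraMap A K a * q i) := by
  classical
  have hinj : Function.Injective (algebraMap A K) := IsFractionRing.injective A K
  -- basic coordinate lemmas
  have hπK : ∀ (y : K) (z : L) (m : Fin (N + 1)), bX.repr (y • z) m = y * bX.repr z m := by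
    intro y z m; rw [map_smul, Finsupp.smul_apply, smul_eq_mul]
  have hπA : ∀ (a : A) (z : L) (m : Fin (N + 1)),
      bX.repr (a • z) m = algebraMap A K a * bX.repr z m := by
    intro a z m; rw [← algebraMap_smul K a z, hπK]
  have hπsub : ∀ (z w : L) (m : Fin (N + 1)),
      bX.repr (z - w) m = bX.repr z m - bX.repr w m := by
    intro z w m; rw [map_sub, Finsupp.sub_apply]
  -- coordinates of powers of x
  have hπpow : ∀ (m j : Fin (N + 1)), bX.repr (x ^ (j : ℕ)) m = if j = m then 1 else 0 := by
    intro m j; rw [← hbX, Module.Basis.repr_self_apply]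
  -- coordinates of x * z
  have hxz : ∀ z : L, x * z = (∑ j : Fin N, bX.repr z j.castSucc • bX j.succ)
      + bX.repr z (Fin.last N) • ∑ m : Fin (N + 1), c m • bX m := by
    intro z
    conv_lhs => rw [← bX.sum_repr z]
    rw [Finset.mul_sum]
    have hcomm : ∀ j : Fin (N + 1), x * (bX.repr z j • bX j) = bX.repr z j • (x * bX j) :=
      fun j => mul_smul_comm _ _ _
    simp_rw [hcomm]
    rw [Fin.sum_univ_castSucc]
    congr 1
    · refine Finset.sum_congr rfl fun j _ => ?_
      rw [hbX, hbX, ← pow_succ']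
      norm_num
    · rw [hbX, ← pow_succ']
      have : (Fin.last N : ℕ) + 1 = N + 1 := by simp
      rw [this, hxn]
      congr 1
      refine Finset.sum_congr rfl fun m _ => ?_
      rw [hbX]
  have hstep : ∀ (z : L) (m : Fin (N + 1)), bX.repr (x * z) m =
      (∑ j : Fin N, bX.repr z j.castSucc * (if j.succ = m then 1 else 0))
        + algebraMap A K (c m) * bX.repr z (Fin.last N) := by
    intro z m
    rw [hxz z, map_add, Finsupp.add_apply, map_sum, Finsupp.finset_sum_apply]
    congr 1
    · refine Finset.sum_congr rfl fun j _ => ?_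
      rw [hπK, Module.Basis.repr_self_apply]
    · rw [hπK]
      have hsum : bX.repr (∑ m' : Fin (N + 1), c m' • bX m') m = algebraMap A K (c m) := by
        rw [map_sum, Finsupp.finset_sum_apply, Finset.sum_eq_single m]
        · rw [hπA, Module.Basis.repr_self_apply, if_pos rfl, mul_one]
        · intro j _ hj
          rw [hπA, Module.Basis.repr_self_apply, if_neg hj, mul_zero]
        · intro h; exact absurd (Finset.mem_univ m) h
      rw [hsum, mul_comm]
  have hreprx : ∀ (z : L) (j : Fin N),
      bX.repr (x * z) j.succ
        = bX.repr z j.castSucc + algebraMap A K (c j.succ) * bX.repr z (Fin.last N) := by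
    intro z j
    rw [hstep]
    congr 1
    rw [Finset.sum_eq_single j]
    · rw [if_pos rfl, mul_one]
    · intro j' _ hj'
      rw [if_neg (fun hc => hj' (Fin.succ_injective N hc)), mul_zero]
    · intro h; exact absurd (Finset.mem_univ j) h
  have hreprx0 : ∀ z : L,
      bX.repr (x * z) 0 = algebraMap A K (c 0) * bX.repr z (Fin.last N) := by
    intro z
    rw [hstep]
    rw [Finset.sum_eq_zero, zero_add]
    intro j _
    rw [if_neg (Fin.succ_ne_zero j), mul_zero]
  -- the leading coefficient modules
  let coordA : Fin (N + 1) → (L →ₗ[A] K) := fun m =>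
    { toFun := fun z => bX.repr z m
      map_add' := fun z w => by simp
      map_smul' := fun a z => by
        simp only [RingHom.id_apply]
        rw [hπA]
        exact (Algebra.smul_def a _).symm }
  let SubD : Fin (N + 1) → Submodule A L := fun i =>
    S ⊓ ⨅ (m : Fin (N + 1)) (_ : (i : ℕ) < (m : ℕ)), LinearMap.ker (coordA m)
  have hSubD : ∀ (i : Fin (N + 1)) (z : L), z ∈ SubD i ↔
      z ∈ S ∧ ∀ m : Fin (N + 1), (i : ℕ) < (m : ℕ) → bX.repr z m = 0 := by
    intro i z
    simp only [SubD, Submodule.mem_inf, Submodule.mem_iInf, LinearMap.mem_ker]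
    rfl
  let J : Fin (N + 1) → Submodule A K := fun i => Submodule.map (coordA i) (SubD i)
  have hJmem : ∀ (i : Fin (N + 1)) (y : K), y ∈ J i ↔
      ∃ z, (z ∈ S ∧ ∀ m : Fin (N + 1), (i : ℕ) < (m : ℕ) → bX.repr z m = 0) ∧
        bX.repr z i = y := by
    intro i y
    simp only [J, Submodule.mem_map]
    constructor
    · rintro ⟨z, hz, rfl⟩; exact ⟨z, (hSubD i z).1 hz, rfl⟩
    · rintro ⟨z, hz, rfl⟩; exact ⟨z, (hSubD i z).2 hz, rfl⟩
  -- generators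
  have hgen : ∀ i : Fin (N + 1), ∃ g : K, g ≠ 0 ∧
      ∀ y : K, y ∈ J i ↔ ∃ a : A, y = algebraMap A K a * g := by
    intro i
    obtain ⟨e, he, hed⟩ := hden i
    refine auxGenerator (J i) e he ?_ ?_
    · intro y hy
      obtain ⟨z, hz, rfl⟩ := (hJmem i y).1 hy
      exact hed z hz.1
    · obtain ⟨z, hzS, hzd, hzi⟩ := hne i
      exact ⟨bX.repr z i, (hJmem i _).2 ⟨z, ⟨hzS, hzd⟩, rfl⟩, hzi⟩
  choose q hq0 hJiff using hgen
  -- choose elements realizing the generators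
  have hβex : ∀ i : Fin (N + 1), ∃ z, (z ∈ S ∧ ∀ m : Fin (N + 1), (i : ℕ) < (m : ℕ) →
      bX.repr z m = 0) ∧ bX.repr z i = q i := by
    intro i
    exact (hJmem i (q i)).1 ((hJiff i (q i)).2 ⟨1, by rw [map_one, one_mul]⟩)
  choose β hβ hβtop using hβex
  have hβS : ∀ i, β i ∈ S := fun i => (hβ i).1
  have hβdeg : ∀ (i m : Fin (N + 1)), (i : ℕ) < (m : ℕ) → bX.repr (β i) m = 0 :=
    fun i => (hβ i).2
  -- the chain of ideals
  have hstep1 : ∀ i : Fin (N + 1), ∀ hiN : (i : ℕ) < N,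
      ∀ y ∈ J i, y ∈ J ⟨(i : ℕ) + 1, by omega⟩ := by
    intro i hiN y hy
    obtain ⟨z, ⟨hzS, hzdeg⟩, rfl⟩ := (hJmem i _).1 hy
    have hlast : bX.repr z (Fin.last N) = 0 := hzdeg _ (by simp [Fin.last]; omega)
    refine (hJmem _ _).2 ⟨x * z, ⟨hxS z hzS, ?_⟩, ?_⟩
    · intro m hm
      simp only at hm
      have hm0 : (0 : ℕ) < (m : ℕ) := by omega
      have hmeq : m = (⟨(m : ℕ) - 1, by omega⟩ : Fin N).succ := Fin.ext (by simp; omega)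
      rw [hmeq, hreprx]
      have h1 : bX.repr z (⟨(m : ℕ) - 1, by omega⟩ : Fin N).castSucc = 0 :=
        hzdeg _ (by simp; omega)
      rw [h1, hlast, mul_zero, add_zero]
    · have hieq : (⟨(i : ℕ) + 1, by omega⟩ : Fin (N + 1)) = (⟨(i : ℕ), hiN⟩ : Fin N).succ :=
        Fin.ext (by simp)
      rw [hieq, hreprx]
      have hic : (⟨(i : ℕ), hiN⟩ : Fin N).castSucc = i := Fin.ext (by simp)
      rw [hic, hlast, mul_zero, add_zero]
  have hJle : ∀ i j : Fin (N + 1), (i : ℕ) ≤ (j : ℕ) → ∀ y ∈ J i, y ∈ J j := by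
    have key : ∀ d : ℕ, ∀ i j : Fin (N + 1), (j : ℕ) = (i : ℕ) + d → ∀ y ∈ J i, y ∈ J j := by
      intro d
      induction d with
      | zero => intro i j hij y hy; have : j = i := Fin.ext (by omega); rw [this]; exact hy
      | succ d ih =>
        intro i j hij y hy
        have hd : (i : ℕ) + d < N + 1 := by omega
        have hy' := ih i ⟨(i : ℕ) + d, hd⟩ (by simp) y hy
        have hlt : ((⟨(i : ℕ) + d, hd⟩ : Fin (N + 1)) : ℕ) < N := by simp; omega
        have := hstep1 _ hlt y hy'
        have hjeq : j = ⟨((⟨(i : ℕ) + d, hd⟩ : Fin (N + 1)) : ℕ) + 1, by omega⟩ :=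
          Fin.ext (by simp; omega)
        rw [hjeq]; exact this
    intro i j hij y hy
    exact key ((j : ℕ) - (i : ℕ)) i j (by omega) y hy
  have hchain : ∀ i j : Fin (N + 1), i ≤ j → ∃ a : A, q i = algebraMap A K a * q j := by
    intro i j hij
    exact (hJiff j (q i)).1 (hJle i j hij ((q i)) ((hJiff i (q i)).2 ⟨1, by rw [map_one, one_mul]⟩))
  -- triangular normalization
  have hJget : ∀ (i : Fin (N + 1)) (z : L), z ∈ S →
      (∀ m : Fin (N + 1), (i : ℕ) < (m : ℕ) → bX.repr z m = 0) →
      ∃ a : A, bX.repr z i = algebraMap A K a * q i := by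
    intro i z hz hdeg
    exact (hJiff i _).1 ((hJmem i _).2 ⟨z, ⟨hz, hdeg⟩, rfl⟩)
  have hP1 : ∀ i : Fin (N + 1), ∀ j : Fin (N + 1),
      ∃ a : A, bX.repr (β i) j = algebraMap A K a * q i := by
    refine auxRevind (fun i IH => ?_)
    by_cases hiN : (i : ℕ) = N
    · -- top case : i = last
      have claim : ∀ j : Fin (N + 1), ∀ z ∈ S,
          ∃ a : A, bX.repr z j = algebraMap A K a * q i := by
        refine auxRevind (fun j IH2 => ?_)
        intro z hz
        by_cases hjN : (j : ℕ) = N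
        · have hji : j = i := Fin.ext (by omega)
          rw [hji]
          exact hJget i z hz (fun m hm => absurd hm (by omega))
        · have hjN' : (j : ℕ) < N := by omega
          have hcast : (⟨(j : ℕ), hjN'⟩ : Fin N).castSucc = j := Fin.ext (by simp)
          have h1 := hreprx z ⟨(j : ℕ), hjN'⟩
          obtain ⟨a1, ha1⟩ := IH2 (⟨(j : ℕ), hjN'⟩ : Fin N).succ (by simp) (x * z) (hxS z hz)
          obtain ⟨a2, ha2⟩ := IH2 (Fin.last N) (by simp [Fin.last]; omega) z hz
          refine ⟨a1 - c (⟨(j : ℕ), hjN'⟩ : Fin N).succ * a2, ?_⟩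
          have h2 : bX.repr z j = bX.repr (x * z) (⟨(j : ℕ), hjN'⟩ : Fin N).succ
              - algebraMap A K (c (⟨(j : ℕ), hjN'⟩ : Fin N).succ) * bX.repr z (Fin.last N) := by
            rw [h1, hcast]; ring
          rw [h2, ha1, ha2, map_sub, map_mul]; ring
      exact fun j => claim j (β i) (hβS i)
    · -- lower case : i < last
      have hiN' : (i : ℕ) < N := by omega
      obtain ⟨isucc, hisucc⟩ : ∃ t : Fin (N + 1), (t : ℕ) = (i : ℕ) + 1 :=
        ⟨⟨(i : ℕ) + 1, by omega⟩, rfl⟩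
      have hisle : i ≤ isucc := by rw [Fin.le_def]; omega
      obtain ⟨e, he⟩ := hchain i isucc hisle
      have hP1succ := IH isucc (by omega)
      have claim : ∀ j : Fin (N + 1), ∀ z ∈ S,
          (∀ m : Fin (N + 1), (i : ℕ) < (m : ℕ) → bX.repr z m = 0) →
          ∃ a : A, bX.repr z j = algebraMap A K a * q i := by
        refine auxRevind (fun j IH2 => ?_)
        intro z hz hzdeg
        rcases lt_trichotomy (j : ℕ) (i : ℕ) with hji | hji | hji
        · -- j < i : the induction step
          obtain ⟨a0, ha0⟩ := hJget i z hz hzdeg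
          have hδS : x * z - (a0 * e) • β isucc ∈ S :=
            S.sub_mem (hxS z hz) (S.smul_mem _ (hβS _))
          have hzlast : bX.repr z (Fin.last N) = 0 := hzdeg _ (by simp [Fin.last]; omega)
          have hδdeg : ∀ m : Fin (N + 1), (i : ℕ) < (m : ℕ) →
              bX.repr (x * z - (a0 * e) • β isucc) m = 0 := by
            intro m hm
            obtain ⟨mm, hmm⟩ : ∃ t : Fin N, (t : ℕ) = (m : ℕ) - 1 := ⟨⟨(m : ℕ) - 1, by omega⟩, rfl⟩
            have hmeq : m = mm.succ := Fin.ext (by simp [Fin.val_succ, hmm]; omega)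
            rw [hπsub, hπA]
            rcases eq_or_lt_of_le (show (i : ℕ) + 1 ≤ (m : ℕ) from hm) with hmi | hmi
            · -- m = i + 1
              have hmeq2 : isucc = m := Fin.ext (by omega)
              have hβm : bX.repr (β isucc) m = q isucc := by rw [← hmeq2]; exact hβtop _
              have hxzm : bX.repr (x * z) m = bX.repr z i := by
                rw [hmeq, hreprx]
                have hc : mm.castSucc = i := Fin.ext (by simp [hmm]; omega)
                rw [hc, hzlast, mul_zero, add_zero]
              rw [hxzm, hβm, ha0, he, map_mul]; ring
            · -- m > i + 1
              have hxzm : bX.repr (x * z) m = 0 := by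
                rw [hmeq, hreprx]
                have hc : bX.repr z mm.castSucc = 0 := hzdeg _ (by simp [hmm]; omega)
                rw [hc, hzlast, mul_zero, add_zero]
              have hβm : bX.repr (β isucc) m = 0 := hβdeg _ _ (by omega)
              rw [hxzm, hβm, mul_zero, sub_zero]
          obtain ⟨jj, hjj⟩ : ∃ t : Fin N, (t : ℕ) = (j : ℕ) := ⟨⟨(j : ℕ), by omega⟩, rfl⟩
          have hcast : jj.castSucc = j := Fin.ext (by simp [hjj])
          have hxzj : bX.repr (x * z) jj.succ = bX.repr z j := by
            rw [hreprx, hcast, hzlast, mul_zero, add_zero]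
          obtain ⟨a1, ha1⟩ := IH2 jj.succ (by simp only [Fin.val_succ, hjj]; omega) _ hδS hδdeg
          obtain ⟨a2, ha2⟩ := hP1succ jj.succ
          refine ⟨a1 + a0 * a2, ?_⟩
          have hδj : bX.repr (x * z - (a0 * e) • β isucc) jj.succ
              = bX.repr (x * z) jj.succ
                - algebraMap A K (a0 * e) * bX.repr (β isucc) jj.succ := by
            rw [hπsub, hπA]
          rw [← hxzj]
          have hsplit : bX.repr (x * z) jj.succ
              = bX.repr (x * z - (a0 * e) • β isucc) jj.succ
                + algebraMap A K (a0 * e) * bX.repr (β isucc) jj.succ := by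
            rw [hδj]; ring
          rw [hsplit, ha1, ha2, he, map_add, map_mul, map_mul]; ring
        · -- j = i
          have : j = i := Fin.ext hji
          rw [this]
          exact hJget i z hz hzdeg
        · -- j > i
          exact ⟨0, by rw [hzdeg j hji, map_zero, zero_mul]⟩
      exact fun j => claim j (β i) (hβS i) (hβdeg i)
  -- the explicit polynomials
  choose aa haa using hP1
  set h : Fin (N + 1) → Polynomial A := fun i =>
    X ^ (i : ℕ) + ∑ j ∈ Finset.univ.filter (fun j : Fin (N + 1) => (j : ℕ) < (i : ℕ)),
      Polynomial.C (aa i j) * X ^ (j : ℕ) with hh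
  have hcoeffhigh : ∀ (i : Fin (N + 1)) (m : ℕ), (i : ℕ) < m → (h i).coeff m = 0 := by
    intro i m him
    rw [hh]
    simp only [Polynomial.coeff_add, Polynomial.finset_sum_coeff, Polynomial.coeff_C_mul,
      Polynomial.coeff_X_pow]
    rw [if_neg (by omega), Finset.sum_eq_zero, add_zero]
    intro j hj
    rw [Finset.mem_filter] at hj
    rw [if_neg (by omega), mul_zero]
  have hcoeffdiag : ∀ i : Fin (N + 1), (h i).coeff (i : ℕ) = 1 := by
    intro i
    rw [hh]
    simp only [Polynomial.coeff_add, Polynomial.finset_sum_coeff, Polynomial.coeff_C_mul,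
      Polynomial.coeff_X_pow]
    rw [Finset.sum_eq_zero, add_zero]
    · simp
    · intro j hj
      rw [Finset.mem_filter] at hj
      rw [if_neg (by omega), mul_zero]
  have hcoefflow : ∀ (i m : Fin (N + 1)), (m : ℕ) < (i : ℕ) → (h i).coeff (m : ℕ) = aa i m := by
    intro i m hmi
    rw [hh]
    simp only [Polynomial.coeff_add, Polynomial.finset_sum_coeff, Polynomial.coeff_C_mul,
      Polynomial.coeff_X_pow]
    rw [if_neg (by omega), zero_add, Finset.sum_eq_single_of_mem m
      (Finset.mem_filter.2 ⟨Finset.mem_univ m, hmi⟩)]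
    · rw [if_pos rfl, mul_one]
    · intro j hj hjm
      rw [if_neg (fun hc : (m : ℕ) = (j : ℕ) => hjm (Fin.ext hc.symm)), mul_zero]
  have hdegle : ∀ i : Fin (N + 1), (h i).natDegree ≤ (i : ℕ) := by
    intro i
    refine Polynomial.natDegree_le_iff_coeff_eq_zero.2 fun m hm => hcoeffhigh i m hm
  have hmonic : ∀ i : Fin (N + 1), (h i).Monic := fun i =>
    Polynomial.monic_of_natDegree_le_of_coeff_eq_one (i : ℕ) (hdegle i) (hcoeffdiag i)
  have hdeg : ∀ i : Fin (N + 1), (h i).natDegree = (i : ℕ) := by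
    intro i
    refine le_antisymm (hdegle i) (Polynomial.le_natDegree_of_ne_zero ?_)
    rw [hcoeffdiag i]; exact one_ne_zero
  -- the basis identification
  have hVcoord : ∀ i m : Fin (N + 1),
      bX.repr (algebraMap K L (q i) * Polynomial.aeval x ((h i).map (algebraMap A K))) m
        = q i * algebraMap A K ((h i).coeff (m : ℕ)) := by
    intro i m
    exact auxTricoord x bX hbX (q i) (h i) (by rw [hdeg]; exact i.isLt) m
  have hVβ : ∀ i : Fin (N + 1),
      algebraMap K L (q i) * Polynomial.aeval x ((h i).map (algebraMap A K)) = β i := by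
    intro i
    apply bX.repr.injective
    refine Finsupp.ext fun m => ?_
    rw [hVcoord]
    rcases lt_trichotomy (m : ℕ) (i : ℕ) with hmi | hmi | hmi
    · rw [hcoefflow i m hmi, (haa i m), mul_comm]
    · have : m = i := Fin.ext hmi
      rw [this, hcoeffdiag, map_one, mul_one, hβtop]
    · rw [hcoeffhigh i _ hmi, map_zero, mul_zero, hβdeg i m hmi]
  -- spanning
  have hspan : ∀ z : L, z ∈ S ↔ z ∈ Submodule.span A (Set.range (fun i =>
      algebraMap K L (q i) * Polynomial.aeval x ((h i).map (algebraMap A K)))) := by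
    have hup : ∀ d : ℕ, ∀ i : Fin (N + 1), (i : ℕ) < d → ∀ z ∈ S,
        (∀ m : Fin (N + 1), (i : ℕ) < (m : ℕ) → bX.repr z m = 0) →
        z ∈ Submodule.span A (Set.range (fun i =>
          algebraMap K L (q i) * Polynomial.aeval x ((h i).map (algebraMap A K)))) := by
      intro d
      induction d with
      | zero => intro i hi; exact absurd hi (by omega)
      | succ d ih =>
        intro i hi z hz hzdeg
        obtain ⟨a, ha⟩ := hJget i z hz hzdeg
        have hz'S : z - a • β i ∈ S := S.sub_mem hz (S.smul_mem _ (hβS i))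
        have hz'deg : ∀ m : Fin (N + 1), (i : ℕ) ≤ (m : ℕ) → bX.repr (z - a • β i) m = 0 := by
          intro m hm
          rw [hπsub, hπA]
          rcases eq_or_lt_of_le hm with hmi | hmi
          · have : m = i := Fin.ext hmi.symm
            rw [this, hβtop, ha]
            ring
          · rw [hzdeg m hmi, hβdeg i m hmi, mul_zero, sub_zero]
        have hmem : algebraMap K L (q i) * Polynomial.aeval x ((h i).map (algebraMap A K))
            ∈ Submodule.span A (Set.range (fun i =>
              algebraMap K L (q i) * Polynomial.aeval x ((h i).map (algebraMap A K)))) :=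
          Submodule.subset_span ⟨i, rfl⟩
        have hzeq : z = (z - a • β i) + a • (algebraMap K L (q i) *
            Polynomial.aeval x ((h i).map (algebraMap A K))) := by
          rw [hVβ i]; ring
        by_cases hi0 : (i : ℕ) = 0
        · have hz'0 : z - a • β i = 0 := by
            have h0 : bX.repr (z - a • β i) = 0 := by
              refine Finsupp.ext fun m => ?_
              rw [Finsupp.coe_zero, Pi.zero_apply]
              exact hz'deg m (by omega)
            exact (LinearEquiv.map_eq_zero_iff bX.repr).1 h0
          rw [hzeq, hz'0, zero_add]
          exact Submodule.smul_mem _ _ hmem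
        · have hlt : ((⟨(i : ℕ) - 1, by omega⟩ : Fin (N + 1)) : ℕ) < d := by simp; omega
          have := ih ⟨(i : ℕ) - 1, by omega⟩ hlt (z - a • β i) hz'S
            (fun m hm => hz'deg m (by simp at hm; omega))
          rw [hzeq]
          exact Submodule.add_mem _ this (Submodule.smul_mem _ _ hmem)
    intro z
    constructor
    · intro hz
      exact hup (N + 1) (Fin.last N) (by simp) z hz (fun m hm => absurd hm (by simp [Fin.last]; omega))
    · intro hz
      have hsub : Set.range (fun i => algebraMap K L (q i) *
          Polynomial.aeval x ((h i).map (algebraMap A K))) ⊆ (S : Set L) := by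
        rintro _ ⟨i, rfl⟩
        show algebraMap K L (q i) * Polynomial.aeval x ((h i).map (algebraMap A K)) ∈ (S : Set L)
        rw [hVβ i]
        exact hβS i
      exact (Submodule.span_le.2 hsub) hz
  exact ⟨q, h, hq0, hmonic, hdeg, hchain, hspan, hJget⟩

end Aux3

set_option maxHeartbeats 1000000 in
set_option synthInstance.maxHeartbeats 400000 in
/-- Every nonzero fractional ideal of `B` has a triangular `k[t]`-basis, whose `q_i` are
unique up to units of `k[t]`, and whose index ideal is `(q_0⋯q_{n-1})·k[t]`. -/
theorem stmt_6
    {k : Type*} [Field k] [PerfectField k]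
    {L : Type*} [Field L] [Algebra (RatFunc k) L]
    (f : Polynomial (Polynomial k)) (n : ℕ)
    (hfn : f.natDegree = n) (hn : 0 < n)
    (hfmonic : f.Monic)
    (hfirr : Irreducible (f.map (algebraMap (Polynomial k) (RatFunc k))))
    (hfsep : (f.map (algebraMap (Polynomial k) (RatFunc k))).Separable)
    (x : L)
    (hx : Polynomial.aeval x (f.map (algebraMap (Polynomial k) (RatFunc k))) = 0)
    (hxgen : Algebra.adjoin (RatFunc k) ({x} : Set L) = ⊤)
    (B : Type*) [CommRing B] [IsDomain B] [IsDedekindDomain B]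
    [Algebra B L] [IsFractionRing B L]
    (hB : ∀ z : L, (∃ b : B, algebraMap B L b = z) ↔
      ((algebraMap (RatFunc k) L).comp (algebraMap (Polynomial k) (RatFunc k))).IsIntegralElem z)
    [Algebra (Polynomial k) L] [IsScalarTower (Polynomial k) (RatFunc k) L]
    (I : FractionalIdeal (nonZeroDivisors B) L) (hI : I ≠ 0) :
    ∃ (q : Fin n → RatFunc k) (h : Fin n → Polynomial (Polynomial k)),
      IsTriangularBasis k L x n {z : L | z ∈ I} q h ∧
      (∀ (q' : Fin n → RatFunc k) (h' : Fin n → Polynomial (Polynomial k)),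
        IsTriangularBasis k L x n {z : L | z ∈ I} q' h' →
        ∀ i, ∃ u : k, u ≠ 0 ∧ q' i = algebraMap k (RatFunc k) u * q i) ∧
      (∀ M : Matrix (Fin n) (Fin n) (RatFunc k),
        (∀ i, triBasisFun k L x n q h i =
          ∑ j : Fin n, algebraMap (RatFunc k) L (M i j) * x ^ (j : ℕ)) →
        ∃ u : k, u ≠ 0 ∧ M.det = algebraMap k (RatFunc k) u * ∏ i, q i) := by
  classical
  obtain ⟨N, rfl⟩ : ∃ N, n = N + 1 := ⟨n - 1, by omega⟩
  have hmonicK : (f.map (algebraMap (Polynomial k) (RatFunc k))).Monic :=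
    hfmonic.map _
  have hmin : minpoly (RatFunc k) x = f.map (algebraMap (Polynomial k) (RatFunc k)) :=
    (minpoly.eq_of_irreducible_of_monic hfirr hx hmonicK).symm
  have hint : IsIntegral (RatFunc k) x := ⟨f.map (algebraMap (Polynomial k) (RatFunc k)), hmonicK, hx⟩
  have htop : IntermediateField.adjoin (RatFunc k) ({x} : Set L) = ⊤ := by
    apply IntermediateField.toSubalgebra_injective
    rw [IntermediateField.adjoin_simple_toSubalgebra_of_isAlgebraic hint.isAlgebraic, hxgen]
    rfl
  -- the power basis
  let e0 : (IntermediateField.adjoin (RatFunc k) ({x} : Set L)) ≃ₐ[RatFunc k] L :=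
    (IntermediateField.equivOfEq htop).trans IntermediateField.topEquiv
  let pb : PowerBasis (RatFunc k) L := (IntermediateField.adjoin.powerBasis hint).map e0
  have hpbgen : pb.gen = x := by
    simp [pb, e0, PowerBasis.map_gen, IntermediateField.adjoin.powerBasis_gen]
  have hpbdim : pb.dim = N + 1 := by
    simp only [pb, PowerBasis.map_dim, IntermediateField.adjoin.powerBasis_dim]
    rw [hmin, hfmonic.natDegree_map]
    exact hfn
  let bX : Module.Basis (Fin (N + 1)) (RatFunc k) L := pb.basis.reindex (finCongr hpbdim)
  have hbX : ∀ j : Fin (N + 1), bX j = x ^ (j : ℕ) := by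
    intro j
    rw [Module.Basis.reindex_apply, PowerBasis.basis_eq_pow, hpbgen]
    simp
  have hsepx : IsSeparable (RatFunc k) x := by
    rw [IsSeparable, hmin]; exact hfsep
  haveI hsepL : Algebra.IsSeparable (RatFunc k) L := by
    have h1 := (IntermediateField.isSeparable_adjoin_simple_iff_isSeparable (RatFunc k) L).2 hsepx
    exact AlgEquiv.Algebra.isSeparable e0
  haveI : FiniteDimensional (RatFunc k) L := Module.Finite.of_basis bX
  -- the subring of integral elements
  have hInt : ∀ z : L, (∃ b : B, algebraMap B L b = z) ↔ IsIntegral (Polynomial k) z := by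
    intro z
    rw [hB z]
    unfold IsIntegral
    rw [IsScalarTower.algebraMap_eq (Polynomial k) (RatFunc k) L]
  -- membership of I is stable under the (Polynomial k)-action and multiplication by x
  have hsmulI : ∀ (a : Polynomial k) (z : L), z ∈ I → a • z ∈ I := by
    intro a z hz
    obtain ⟨b, hb⟩ := (hInt (algebraMap (Polynomial k) L a)).2 (isIntegral_algebraMap)
    have : a • z = b • z := by
      rw [Algebra.smul_def, Algebra.smul_def, hb]
    rw [this]
    exact Submodule.smul_mem (I : Submodule B L) b hz
  have hxint : IsIntegral (Polynomial k) x := by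
    refine ⟨f, hfmonic, ?_⟩
    rw [IsScalarTower.algebraMap_eq (Polynomial k) (RatFunc k) L, ← Polynomial.eval₂_map]
    exact hx
  have hxmul : ∀ z : L, z ∈ I → x * z ∈ I := by
    intro z hz
    obtain ⟨b, hb⟩ := (hInt x).2 hxint
    have : x * z = b • z := by rw [Algebra.smul_def, hb]
    rw [this]
    exact Submodule.smul_mem (I : Submodule B L) b hz
  let SubI : Submodule (Polynomial k) L :=
    { carrier := {z : L | z ∈ I}
      add_mem' := fun hz hw => Submodule.add_mem (I : Submodule B L) hz hw
      zero_mem' := Submodule.zero_mem (I : Submodule B L)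
      smul_mem' := fun a z hz => hsmulI a z hz }
  -- the relation for x ^ (N + 1)
  have hxn : x ^ (N + 1) = ∑ m : Fin (N + 1), (-(f.coeff (m : ℕ))) • x ^ (m : ℕ) := by
    have hdegmap : (f.map (algebraMap (Polynomial k) (RatFunc k))).natDegree = N + 1 := by
      rw [hfmonic.natDegree_map]; exact hfn
    have h1 := Polynomial.aeval_eq_sum_range
      (p := f.map (algebraMap (Polynomial k) (RatFunc k))) x
    rw [hx, hdegmap, Finset.sum_range_succ] at h1
    have hlead : (f.map (algebraMap (Polynomial k) (RatFunc k))).coeff (N + 1) = 1 := by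
      have h2 := hmonicK.coeff_natDegree
      rwa [hdegmap] at h2
    rw [hlead, one_smul] at h1
    have h2 : x ^ (N + 1) = -∑ i ∈ Finset.range (N + 1),
        (f.map (algebraMap (Polynomial k) (RatFunc k))).coeff i • x ^ i :=
      eq_neg_of_add_eq_zero_right h1.symm
    have h3 : ∑ m : Fin (N + 1), (-(f.coeff (m : ℕ))) • x ^ (m : ℕ)
        = -∑ i ∈ Finset.range (N + 1),
            (f.map (algebraMap (Polynomial k) (RatFunc k))).coeff i • x ^ i := by
      rw [← Finset.sum_range (fun i => (-(f.coeff i) : Polynomial k) • x ^ i),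
        ← Finset.sum_neg_distrib]
      refine Finset.sum_congr rfl fun i _ => ?_
      rw [← algebraMap_smul (RatFunc k) (-(f.coeff i)), map_neg, neg_smul, Polynomial.coeff_map]
    rw [h2, ← h3]
  -- the Noetherian machinery : common denominators for coordinates
  haveI hNoeth : IsNoetherian (Polynomial k) (integralClosure (Polynomial k) L) :=
    IsIntegralClosure.isNoetherian (Polynomial k) (RatFunc k) L (integralClosure (Polynomial k) L)
  obtain ⟨nw, w, hw⟩ := Module.Finite.exists_fin (R := Polynomial k)
    (M := integralClosure (Polynomial k) L)
  obtain ⟨d, hdS, hdI⟩ := I.isFractional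
  have hu0 : algebraMap B L d ≠ 0 := by
    have hd0 : d ≠ 0 := nonZeroDivisors.ne_zero hdS
    simpa using fun hc => hd0 ((IsFractionRing.injective B L) (by simpa using hc))
  have hWspan : ∀ z : L, z ∈ I →
      z ∈ Submodule.span (Polynomial k)
        (Set.range (fun t => (algebraMap B L d)⁻¹ * (w t : L))) := by
    intro z hz
    have h1 : algebraMap B L d * z ∈ integralClosure (Polynomial k) L := by
      obtain ⟨b, hb⟩ := hdI z hz
      have hbz : algebraMap B L b = algebraMap B L d * z := by
        rw [hb, Algebra.smul_def]
      exact (hInt _).1 ⟨b, hbz⟩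
    have h2 : (⟨algebraMap B L d * z, h1⟩ : integralClosure (Polynomial k) L)
        ∈ Submodule.span (Polynomial k) (Set.range w) := by
      rw [hw]; trivial
    obtain ⟨g, hg⟩ := (Submodule.mem_span_range_iff_exists_fun (Polynomial k)).1 h2
    have hg' : ∑ t, g t • (w t : L) = algebraMap B L d * z := by
      have := congrArg (fun v : integralClosure (Polynomial k) L => (v : L)) hg
      simpa using this
    refine (Submodule.mem_span_range_iff_exists_fun (Polynomial k)).2 ⟨g, ?_⟩
    have : ∑ t, g t • ((algebraMap B L d)⁻¹ * (w t : L))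
        = (algebraMap B L d)⁻¹ * ∑ t, g t • (w t : L) := by
      rw [Finset.mul_sum]
      exact Finset.sum_congr rfl fun t _ => (mul_smul_comm _ _ _).symm
    rw [this, hg', inv_mul_cancel_left₀ hu0]
  obtain ⟨den, hdenint⟩ := IsLocalization.exist_integer_multiples_of_finite
    (nonZeroDivisors (Polynomial k))
    (fun p : (Fin nw) × Fin (N + 1) => bX.repr ((algebraMap B L d)⁻¹ * (w p.1 : L)) p.2)
  have hdenI : ∀ i : Fin (N + 1), ∃ eA : Polynomial k, eA ≠ 0 ∧ ∀ z ∈ SubI,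
      ∃ a : Polynomial k, algebraMap (Polynomial k) (RatFunc k) eA * bX.repr z i
        = algebraMap (Polynomial k) (RatFunc k) a := by
    intro i
    refine ⟨(den : Polynomial k), nonZeroDivisors.ne_zero den.2, ?_⟩
    intro z hz
    obtain ⟨g, hg⟩ := (Submodule.mem_span_range_iff_exists_fun (Polynomial k)).1 (hWspan z hz)
    have hrep : bX.repr z i = ∑ t, algebraMap (Polynomial k) (RatFunc k) (g t)
        * bX.repr ((algebraMap B L d)⁻¹ * (w t : L)) i := by
      rw [← hg, map_sum, Finsupp.finset_sum_apply]
      refine Finset.sum_congr rfl fun t _ => ?_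
      rw [← algebraMap_smul (RatFunc k) (g t), map_smul, Finsupp.smul_apply, smul_eq_mul]
    choose ct hct using fun t => hdenint (t, i)
    refine ⟨∑ t, g t * ct t, ?_⟩
    rw [hrep, Finset.mul_sum, map_sum]
    refine Finset.sum_congr rfl fun t _ => ?_
    have hct' := hct t
    rw [Algebra.smul_def] at hct'
    rw [map_mul (algebraMap (Polynomial k) (RatFunc k)) (g t) (ct t), hct']
    ring
  -- nonvanishing of leading coefficient modules
  have hne : ∀ i : Fin (N + 1), ∃ z ∈ SubI, (∀ m : Fin (N + 1), (i : ℕ) < (m : ℕ) →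
      bX.repr z m = 0) ∧ bX.repr z i ≠ 0 := by
    obtain ⟨y, hyI, hy0⟩ : ∃ y, y ∈ I ∧ y ≠ 0 := by
      by_contra hc
      push_neg at hc
      exact hI (FractionalIdeal.eq_zero_iff.2 fun y hy => hc y hy)
    have hpow : ∀ jn : ℕ, x ^ jn * y ∈ I := by
      intro jn
      induction jn with
      | zero => simpa using hyI
      | succ jn ih =>
        have := hxmul _ ih
        rwa [← mul_assoc, ← pow_succ'] at this
    intro i
    set cy : Fin (N + 1) → RatFunc k := fun j => bX.repr (x ^ (i : ℕ) * y⁻¹) j with hcydef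
    have hcy : ∑ j, cy j • (x ^ (j : ℕ) * y) = x ^ (i : ℕ) := by
      have h1 : ∑ j, cy j • (x ^ (j : ℕ) * y) = (∑ j, cy j • bX j) * y := by
        rw [Finset.sum_mul]
        refine Finset.sum_congr rfl fun j _ => ?_
        rw [hbX, smul_mul_assoc]
      rw [h1, bX.sum_repr, mul_assoc, inv_mul_cancel₀ hy0, mul_one]
    obtain ⟨dy, hdy⟩ := IsLocalization.exist_integer_multiples_of_finite
      (nonZeroDivisors (Polynomial k)) cy
    choose ay hay using fun j => hdy j
    have hzeq : ∑ j, ay j • (x ^ (j : ℕ) * y)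
        = ((dy : Polynomial k) : Polynomial k) • x ^ (i : ℕ) := by
      have h2 : ∀ j : Fin (N + 1), ay j • (x ^ (j : ℕ) * y)
          = algebraMap (Polynomial k) (RatFunc k) (dy : Polynomial k)
            • (cy j • (x ^ (j : ℕ) * y)) := by
        intro j
        have hay' := hay j
        rw [Algebra.smul_def] at hay'
        rw [← algebraMap_smul (RatFunc k) (ay j), hay', mul_smul]
      simp_rw [h2]
      rw [← Finset.smul_sum, hcy, algebraMap_smul]
    refine ⟨∑ j, ay j • (x ^ (j : ℕ) * y), ?_, ?_, ?_⟩
    · exact Submodule.sum_mem SubI fun j _ => Submodule.smul_mem SubI _ (hpow (j : ℕ))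
    · intro m hm
      rw [hzeq, ← algebraMap_smul (RatFunc k) ((dy : Polynomial k)) (x ^ (i : ℕ)), map_smul,
        Finsupp.smul_apply, ← hbX i, Module.Basis.repr_self_apply,
        if_neg (Fin.ne_of_lt (Fin.lt_def.mpr hm)), smul_zero]
    · rw [hzeq, ← algebraMap_smul (RatFunc k) ((dy : Polynomial k)) (x ^ (i : ℕ)), map_smul,
        Finsupp.smul_apply, ← hbX i, Module.Basis.repr_self_apply, if_pos rfl]
      simp only [smul_eq_mul, mul_one]
      intro hc
      exact nonZeroDivisors.ne_zero dy.2
        ((IsFractionRing.injective (Polynomial k) (RatFunc k)) (by rwa [map_zero]))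
  -- apply the main construction
  obtain ⟨q, h, hq0, hmonic, hdeg, hchain, hspan, hJget⟩ :=
    auxExists x bX hbX (fun m : Fin (N + 1) => -(f.coeff (m : ℕ))) hxn SubI
      (fun z hz => hxmul z hz) hdenI hne
  -- coordinates of the triangular family
  have hVcoord : ∀ (q' : Fin (N + 1) → RatFunc k) (h' : Fin (N + 1) → Polynomial (Polynomial k)),
      (∀ i : Fin (N + 1), (h' i).natDegree = (i : ℕ)) →
      ∀ i m : Fin (N + 1), bX.repr (triBasisFun k L x (N + 1) q' h' i) m
        = q' i * algebraMap (Polynomial k) (RatFunc k) ((h' i).coeff (m : ℕ)) := by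
    intro q' h' hd' i m
    exact auxTricoord x bX hbX (q' i) (h' i) (by rw [hd' i]; exact i.isLt) m
  have hvt : ∀ (q' : Fin (N + 1) → RatFunc k) (h' : Fin (N + 1) → Polynomial (Polynomial k)),
      (∀ i : Fin (N + 1), (h' i).natDegree = (i : ℕ)) →
      ∀ j m : Fin (N + 1), (j : ℕ) < (m : ℕ) →
        bX.repr (triBasisFun k L x (N + 1) q' h' j) m = 0 := by
    intro q' h' hd' j m hjm
    rw [hVcoord q' h' hd' j m, Polynomial.coeff_eq_zero_of_natDegree_lt (by rw [hd' j]; exact hjm),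
      map_zero, mul_zero]
  have hvd : ∀ (q' : Fin (N + 1) → RatFunc k) (h' : Fin (N + 1) → Polynomial (Polynomial k)),
      (∀ i : Fin (N + 1), (h' i).natDegree = (i : ℕ)) → (∀ i, (h' i).Monic) →
      ∀ j : Fin (N + 1), bX.repr (triBasisFun k L x (N + 1) q' h' j) j = q' j := by
    intro q' h' hd' hm' j
    rw [hVcoord q' h' hd' j j]
    have : (h' j).coeff (j : ℕ) = 1 := by
      have := (hm' j).coeff_natDegree
      rwa [hd' j] at this
    rw [this, map_one, mul_one]
  have htri : IsTriangularBasis k L x (N + 1) {z : L | z ∈ I} q h := by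
    refine ⟨hq0, hmonic, hdeg, hchain, ?_, ?_⟩
    · exact auxTriindep bX (triBasisFun k L x (N + 1) q h) q hq0 (hvt q h hdeg) (hvd q h hdeg hmonic)
    · intro z
      exact hspan z
  refine ⟨q, h, htri, ?_, ?_⟩
  · -- uniqueness of the q i up to units
    rintro q' h' ⟨hq'0, hm', hd', _hc', _hi', hsp'⟩ i
    -- q' i is a multiple of q i
    obtain ⟨a, ha⟩ := hJget i (triBasisFun k L x (N + 1) q' h' i)
      ((hsp' _).2 (Submodule.subset_span ⟨i, rfl⟩))
      (fun m hm => hvt q' h' hd' i m hm)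
    rw [hvd q' h' hd' hm' i] at ha
    -- q i is a multiple of q' i
    obtain ⟨b, hb⟩ := auxLeadlem bX (triBasisFun k L x (N + 1) q' h') q' hq'0
      (hvt q' h' hd') (hvd q' h' hd' hm')
      (triBasisFun k L x (N + 1) q h i)
      ((hsp' _).1 ((hspan _).2 (Submodule.subset_span ⟨i, rfl⟩)))
      i (fun m hm => hvt q h hdeg i m hm)
    rw [hvd q h hdeg hmonic i] at hb
    -- combine
    have hab : algebraMap (Polynomial k) (RatFunc k) (a * b) * q' i = 1 * q' i := by
      rw [map_mul, one_mul]
      calc algebraMap (Polynomial k) (RatFunc k) a * algebraMap (Polynomial k) (RatFunc k) b * q' i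
          = algebraMap (Polynomial k) (RatFunc k) a * q i := by rw [mul_assoc, ← hb]
        _ = q' i := ha.symm
    have hab1 : a * b = 1 := by
      have h1 : algebraMap (Polynomial k) (RatFunc k) (a * b) = 1 :=
        mul_right_cancel₀ (hq'0 i) hab
      exact (IsFractionRing.injective (Polynomial k) (RatFunc k)) (by rw [h1, map_one])
    obtain ⟨r, hru, hCr⟩ := Polynomial.isUnit_iff.1 (IsUnit.of_mul_eq_one (a := a) b hab1)
    refine ⟨r, hru.ne_zero, ?_⟩
    have hmapr : algebraMap k (RatFunc k) r = algebraMap (Polynomial k) (RatFunc k) a := by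
      rw [← hCr, IsScalarTower.algebraMap_apply k (Polynomial k) (RatFunc k), Polynomial.algebraMap_eq]
    rw [hmapr]
    exact ha
  · -- the index ideal
    intro M hM
    have hMij : ∀ i m : Fin (N + 1), M i m = bX.repr (triBasisFun k L x (N + 1) q h i) m := by
      intro i m
      have h1 : triBasisFun k L x (N + 1) q h i = ∑ j, M i j • bX j := by
        rw [hM i]
        refine Finset.sum_congr rfl fun j _ => ?_
        rw [hbX, Algebra.smul_def]
      rw [h1, map_sum, Finsupp.finset_sum_apply, Finset.sum_eq_single m]
      · rw [map_smul, Finsupp.smul_apply, Module.Basis.repr_self_apply, if_pos rfl, smul_eq_mul, mul_one]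
      · intro j _ hj
        rw [map_smul, Finsupp.smul_apply, Module.Basis.repr_self_apply, if_neg hj, smul_eq_mul, mul_zero]
      · intro hmem; exact absurd (Finset.mem_univ m) hmem
    have htriM : M.BlockTriangular OrderDual.toDual := by
      intro i j hij
      rw [hMij i j, hvt q h hdeg i j hij]
    refine ⟨1, one_ne_zero, ?_⟩
    rw [map_one, one_mul, Matrix.det_of_lowerTriangular M htriM]
    refine Finset.prod_congr rfl fun i _ => ?_
    rw [hMij i i, hvd q h hdeg hmonic i]
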